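/- arXiv:2012.02396 — 9 statements merged into one kernel-verified Lean document; each statement's English description precedes it below -/
import Mathlib

section
/- Every meager-additive subset of the real line ℝ has strong measure zero. -/
open Pointwise

/-- A subset `X` of `ℝ` is meager-additive if `X + M` is meager for every meager `M ⊆ ℝ`. -/
def IsMeagerAdditive (X : Set ℝ) : Prop :=
  ∀ M : Set ℝ, IsMeagre M → IsMeagre (X + M)

/-- A subset `X` of a metric space `Y` has strong measure zero if for every sequence
`(ε n)` of positive reals there is a sequence `(U n)` of subsets of `Y` with
`diam (U n) ≤ ε n` for every `n` whose union covers `X`. -/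
def HasStrongMeasureZero {Y : Type*} [MetricSpace Y] (X : Set Y) : Prop :=
  ∀ ε : ℕ → ℝ, (∀ n, 0 < ε n) →
    ∃ U : ℕ → Set Y, (∀ n, EMetric.diam (U n) ≤ ENNReal.ofReal (ε n)) ∧ X ⊆ ⋃ n, U n

/-- Every meager-additive subset of the real line has strong measure zero. -/
theorem hasStrongMeasureZero_of_isMeagerAdditive (X : Set ℝ) (hX : IsMeagerAdditive X) :
    HasStrongMeasureZero X := by
  intro ε hε
  set q : ℕ → ℝ := fun n => ((Denumerable.ofNat ℚ n : ℚ) : ℝ) with hq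
  set G : Set ℝ := ⋃ n, Metric.ball (q n) (ε n / 2) with hG
  have hGopen : IsOpen G := isOpen_iUnion fun n => Metric.isOpen_ball
  have hGdense : Dense G := by
    have h1 : Set.range ((↑) : ℚ → ℝ) ⊆ G := by
      rintro _ ⟨r, rfl⟩
      rcases (Denumerable.eqv ℚ).symm.surjective r with ⟨n, rfl⟩
      exact Set.mem_iUnion.2 ⟨n, Metric.mem_ball_self (half_pos (hε n))⟩
    exact Rat.denseRange_cast.mono h1
  have hM : IsMeagre Gᶜ := by
    unfold IsMeagre
    rw [compl_compl]
    exact residual_of_dense_open hGopen hGdense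
  have hXM : IsMeagre (X + Gᶜ) := hX _ hM
  have hdense : Dense (X + Gᶜ)ᶜ := dense_of_mem_residual hXM
  obtain ⟨t, ht⟩ := hdense.nonempty
  refine ⟨fun n => Metric.ball (t - q n) (ε n / 2), fun n => ?_, fun x hx => ?_⟩
  · calc EMetric.diam (Metric.ball (t - q n) (ε n / 2))
        ≤ 2 * ENNReal.ofReal (ε n / 2) := by
          rw [← Metric.emetric_ball]; exact EMetric.diam_ball
      _ = ENNReal.ofReal (ε n) := by
          rw [← ENNReal.ofReal_ofNat, ← ENNReal.ofReal_mul (by norm_num)]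
          congr 1; ring
  · have htx : t - x ∈ G := by
      by_contra h
      exact ht ⟨x, hx, t - x, h, by ring⟩
    obtain ⟨n, hn⟩ := Set.mem_iUnion.1 htx
    refine Set.mem_iUnion.2 ⟨n, ?_⟩
    simp only [Metric.mem_ball, Real.dist_eq] at hn ⊢
    have : |x - (t - q n)| = |t - x - q n| := by rw [abs_sub_comm]; ring_nf
    rw [this]; exact hn
end

section
/- Let c : (ℕ → Bool) → [0,1] be the map c(x) = Σ_{n∈ℕ} x(n)/2^{n+1} (reading true as 1 and false as 0). A subset X of the unit interval [0,1] has strong measure zero if, and only if, c⁻¹(X) has strong measure zero as a subset of the Cantor space. -/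
-- The Cantor space `ℕ → Bool` carries the metric `dist x y = (1/2)^n`, where `n` is the
-- least index at which `x` and `y` differ; the unit interval carries the metric from `ℝ`.
attribute [local instance] PiNat.metricSpace

lemma cantorSum_mem_Icc (x : ℕ → Bool) :
    (∑' n : ℕ, (if x n then (1 : ℝ) else 0) / 2 ^ (n + 1)) ∈ Set.Icc (0 : ℝ) 1 := by
  have key : ∀ n : ℕ, (1 : ℝ) / 2 / 2 ^ n = 1 / 2 ^ (n + 1) := by
    intro n; rw [pow_succ]; ring
  have hle : ∀ n : ℕ, (if x n then (1 : ℝ) else 0) / 2 ^ (n + 1) ≤ 1 / 2 / 2 ^ n := by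
    intro n
    rw [key n]
    by_cases h : x n <;> simp [h]
  have hnn : ∀ n : ℕ, 0 ≤ (if x n then (1 : ℝ) else 0) / 2 ^ (n + 1) := by
    intro n
    by_cases h : x n <;> simp [h]
  constructor
  · exact tsum_nonneg hnn
  · calc (∑' n : ℕ, (if x n then (1 : ℝ) else 0) / 2 ^ (n + 1))
        ≤ ∑' n : ℕ, (1 : ℝ) / 2 / 2 ^ n := by
          refine Summable.tsum_le_tsum hle ?_ ?_
          · exact Summable.of_nonneg_of_le hnn hle (summable_geometric_two' 1)
          · exact summable_geometric_two' 1
      _ = 1 := tsum_geometric_two' 1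

/-- The canonical map `c : (ℕ → Bool) → [0,1]`, `c x = ∑ x n / 2 ^ (n + 1)`. -/
noncomputable def cantorMap (x : ℕ → Bool) : Set.Icc (0 : ℝ) 1 :=
  ⟨∑' n : ℕ, (if x n then (1 : ℝ) else 0) / 2 ^ (n + 1), cantorSum_mem_Icc x⟩

/-!
The map `c` is continuous on the compact Cantor space, hence uniformly continuous, and it is
onto `[0,1]`; uniformly continuous maps preserve strong measure zero, so `X = c (c⁻¹ X)` inherits
it from `c⁻¹ X`.

Conversely, write `P_m x` for the natural number with binary digits `x 0, …, x (m-1)`, so that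
`c x ∈ [P_m x / 2^m, (P_m x + 1) / 2^m]`. If `|c x - c y| < 2^(-m)` then `|P_m x - P_m y| ≤ 1`,
so on the preimage of a set of diameter `≤ 2^(-m-1)` the parity of `P_m` determines `P_m`, hence
the first `m` digits: that preimage is the union of two sets of diameter `≤ 2^(-m)`. Covering `X`
by such sets and splitting each preimage in two covers `c⁻¹ X` by twice as many small sets.
-/

open Metric Set

section StrongMeasureZero

variable {Y Z : Type*} [MetricSpace Y] [MetricSpace Z]

lemma dist_le_of_ediam_le {U : Set Y} {x y : Y} {r : ℝ} (hr : 0 ≤ r)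
    (hU : ediam U ≤ ENNReal.ofReal r) (hx : x ∈ U) (hy : y ∈ U) : dist x y ≤ r :=
  (edist_le_ofReal hr).1 ((edist_le_ediam_of_mem hx hy).trans hU)

theorem HasStrongMeasureZero.image_of_uniformContinuous {X : Set Y}
    (hX : HasStrongMeasureZero X) {f : Y → Z} (hf : UniformContinuous f) :
    HasStrongMeasureZero (f '' X) := by
  intro ε hε
  choose δ hδ hfδ using fun n => Metric.uniformContinuous_iff.1 hf (ε n) (hε n)
  obtain ⟨U, hU, hXU⟩ := hX (fun n => δ n / 2) fun n => half_pos (hδ n)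
  refine ⟨fun n => f '' U n, fun n => ediam_le_of_forall_dist_le ?_, ?_⟩
  · rintro _ ⟨x, hx, rfl⟩ _ ⟨y, hy, rfl⟩
    refine (hfδ n ?_).le
    linarith [dist_le_of_ediam_le (half_pos (hδ n)).le (hU n) hx hy, hδ n]
  · rw [← image_iUnion]
    exact image_mono hXU

theorem HasStrongMeasureZero.preimage_of_cover_by_two {X : Set Z}
    (hX : HasStrongMeasureZero X) {f : Y → Z}
    (hf : ∀ ε > 0, ∃ δ > 0, ∀ U : Set Z, ediam U ≤ ENNReal.ofReal δ →
      ∃ V : Bool → Set Y, (∀ b, ediam (V b) ≤ ENNReal.ofReal ε) ∧ f ⁻¹' U ⊆ ⋃ b, V b) :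
    HasStrongMeasureZero (f ⁻¹' X) := by
  intro ε hε
  choose δ hδ V hV hUV using hf
  -- `U n` is split between the indices `2n` and `2n+1`, so it must be small for both.
  set η : ℕ → ℝ := fun n => min (ε (Nat.bit false n)) (ε (Nat.bit true n))
  have hη : ∀ n, 0 < η n := fun n => lt_min (hε _) (hε _)
  obtain ⟨U, hU, hXU⟩ := hX (fun n => δ (η n) (hη n)) fun n => hδ _ _
  refine ⟨fun j => V _ _ _ (hU j.div2) j.bodd, fun j => (hV _ _ _ _ _).trans ?_, ?_⟩
  · apply ENNReal.ofReal_le_ofReal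
    conv_rhs => rw [← j.bit_bodd_div2]
    cases j.bodd
    exacts [min_le_left _ _, min_le_right _ _]
  · intro x hx
    obtain ⟨n, hn⟩ := mem_iUnion.1 (hXU hx)
    obtain ⟨b, hb⟩ := mem_iUnion.1 (hUV _ _ _ (hU n) hn)
    obtain ⟨j, rfl, rfl⟩ : ∃ j : ℕ, j.div2 = n ∧ j.bodd = b :=
      ⟨_, Nat.div2_bit b n, Nat.bodd_bit b n⟩
    exact mem_iUnion.2 ⟨j, hb⟩

end StrongMeasureZero

namespace Real

variable {b : ℕ}

def leadingDigitsValue (d : ℕ → Fin b) : ℕ → ℕ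
  | 0 => 0
  | m + 1 => b * leadingDigitsValue d m + d m

lemma sum_ofDigitsTerm_eq_leadingDigitsValue (d : ℕ → Fin b) (m : ℕ) :
    ∑ i ∈ Finset.range m, ofDigitsTerm d i = leadingDigitsValue d m / (b : ℝ) ^ m := by
  have hb : (b : ℝ) ≠ 0 := by have := Fin.pos (d 0); positivity
  induction m with
  | zero => simp [leadingDigitsValue]
  | succ m ih =>
    rw [Finset.sum_range_succ, ih, ofDigitsTerm, leadingDigitsValue]
    push_cast
    field_simp
    ring

lemma ofDigits_mem_Icc_leadingDigitsValue (d : ℕ → Fin b) (m : ℕ) :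
    ofDigits d ∈ Icc (leadingDigitsValue d m / (b : ℝ) ^ m)
      ((leadingDigitsValue d m + 1) / (b : ℝ) ^ m) := by
  have htail := ofDigits_nonneg fun i => d (i + m)
  have htail' := ofDigits_le_one fun i => d (i + m)
  rw [ofDigits_eq_sum_add_ofDigits d m, sum_ofDigitsTerm_eq_leadingDigitsValue, add_div, one_div]
  have hinv : 0 ≤ ((b : ℝ) ^ m)⁻¹ := by positivity
  constructor <;> nlinarith

lemma leadingDigitsValue_le_add_one {x y : ℕ → Fin b} {m : ℕ}
    (h : ofDigits x - ofDigits y < ((b : ℝ) ^ m)⁻¹) :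
    leadingDigitsValue x m ≤ leadingDigitsValue y m + 1 := by
  obtain ⟨hx, -⟩ := ofDigits_mem_Icc_leadingDigitsValue x m
  obtain ⟨-, hy⟩ := ofDigits_mem_Icc_leadingDigitsValue y m
  have hbm : (0 : ℝ) < (b : ℝ) ^ m := by have := Fin.pos (x 0); positivity
  rw [div_le_iff₀ hbm] at hx
  rw [le_div_iff₀ hbm] at hy
  have h' : (ofDigits x - ofDigits y) * (b : ℝ) ^ m < 1 := (lt_div_iff₀ hbm).1 (by rwa [one_div])
  have hlt : (leadingDigitsValue x m : ℝ) < leadingDigitsValue y m + 2 := by nlinarith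
  have : leadingDigitsValue x m < leadingDigitsValue y m + 2 := by exact_mod_cast hlt
  omega

lemma eq_of_leadingDigitsValue_eq {x y : ℕ → Fin b} {m : ℕ}
    (h : leadingDigitsValue x m = leadingDigitsValue y m) : ∀ i < m, x i = y i := by
  induction m with
  | zero => simp
  | succ m ih =>
    simp only [leadingDigitsValue] at h
    have hlast : x m = y m := by
      apply Fin.ext
      have := congrArg (· % b) h
      simpa only [Nat.mul_add_mod, Nat.mod_eq_of_lt (x m).isLt, Nat.mod_eq_of_lt (y m).isLt]
        using this
    rw [hlast, Nat.add_right_cancel_iff] at h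
    intro i hi
    rcases Nat.lt_succ_iff_lt_or_eq.1 hi with hi | rfl
    exacts [ih (Nat.eq_of_mul_eq_mul_left (Fin.pos (x 0)) h) i hi, hlast]

end Real

open Real

def binaryDigits (x : ℕ → Bool) : ℕ → Fin 2 := finTwoEquiv.symm ∘ x

lemma coe_cantorMap (x : ℕ → Bool) : (cantorMap x : ℝ) = ofDigits (binaryDigits x) := by
  simp only [cantorMap, binaryDigits, ofDigits, ofDigitsTerm, Function.comp_apply, div_eq_mul_inv]
  congr 1 with n
  cases x n <;> simp [finTwoEquiv]

lemma continuous_cantorMap : Continuous cantorMap := by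
  refine continuous_induced_rng.2 ?_
  simp only [Function.comp_def, coe_cantorMap, binaryDigits]
  exact continuous_ofDigits.comp <| continuous_pi fun n =>
    continuous_of_discreteTopology.comp (continuous_apply n)

lemma cantorMap_surjective : Function.Surjective cantorMap := by
  rintro ⟨r, hr⟩
  obtain ⟨d, -, hd⟩ := ofDigits_SurjOn one_lt_two hr
  refine ⟨finTwoEquiv ∘ d, Subtype.ext ?_⟩
  simpa [coe_cantorMap, binaryDigits, Function.comp_def] using hd

lemma dist_le_of_dist_cantorMap_lt {x y : ℕ → Bool} {m : ℕ}
    (hxy : dist (cantorMap x) (cantorMap y) < (1 / 2) ^ m)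
    (hparity : (leadingDigitsValue (binaryDigits x) m).bodd =
      (leadingDigitsValue (binaryDigits y) m).bodd) :
    dist x y ≤ (1 / 2) ^ m := by
  rw [Subtype.dist_eq, coe_cantorMap, coe_cantorMap, Real.dist_eq, abs_sub_lt_iff] at hxy
  have hpow : ((1 : ℝ) / 2) ^ m = (((2 : ℕ) : ℝ) ^ m)⁻¹ := by simp
  have h₁ := leadingDigitsValue_le_add_one (hpow ▸ hxy.1)
  have h₂ := leadingDigitsValue_le_add_one (hpow ▸ hxy.2)
  have hmod := Nat.mod_two_of_bodd (leadingDigitsValue (binaryDigits x) m)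
  rw [hparity, ← Nat.mod_two_of_bodd] at hmod
  have heq := eq_of_leadingDigitsValue_eq (x := binaryDigits x) (y := binaryDigits y) (m := m)
    (by omega)
  refine PiNat.mem_cylinder_iff_dist_le.1 fun i hi => ?_
  exact finTwoEquiv.symm.injective (heq i hi)

lemma exists_cover_cantorMap_preimage_by_two {ε : ℝ} (hε : 0 < ε) :
    ∃ δ > 0, ∀ U : Set (Icc (0 : ℝ) 1), ediam U ≤ ENNReal.ofReal δ →
      ∃ V : Bool → Set (ℕ → Bool), (∀ b, ediam (V b) ≤ ENNReal.ofReal ε) ∧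
        cantorMap ⁻¹' U ⊆ ⋃ b, V b := by
  obtain ⟨m, hm⟩ := exists_pow_lt_of_lt_one hε one_half_lt_one
  refine ⟨(1 / 2) ^ (m + 1), by positivity, fun U hU => ?_⟩
  refine ⟨fun b => {x | cantorMap x ∈ U ∧ (leadingDigitsValue (binaryDigits x) m).bodd = b},
    fun b => ediam_le_of_forall_dist_le ?_, fun x hx => mem_iUnion.2 ⟨_, hx, rfl⟩⟩
  rintro x ⟨hx, rfl⟩ y ⟨hy, hparity⟩
  refine (dist_le_of_dist_cantorMap_lt ?_ hparity.symm).trans hm.le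
  calc dist (cantorMap x) (cantorMap y) ≤ (1 / 2) ^ (m + 1) :=
        dist_le_of_ediam_le (by positivity) hU hx hy
    _ < (1 / 2) ^ m := pow_lt_pow_right_of_lt_one₀ (by norm_num) one_half_lt_one m.lt_succ_self

/-- A subset `X` of the unit interval has strong measure zero iff `c ⁻¹' X` has
strong measure zero as a subset of the Cantor space. -/
theorem hasStrongMeasureZero_iff_preimage_cantorMap (X : Set (Set.Icc (0 : ℝ) 1)) :
    HasStrongMeasureZero X ↔ HasStrongMeasureZero (cantorMap ⁻¹' X) := by
  refine ⟨fun h => h.preimage_of_cover_by_two fun ε => exists_cover_cantorMap_preimage_by_two,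
    fun h => ?_⟩
  -- The uniformity of `PiNat.metricSpace` is not the global product uniformity instance.
  have hc := @CompactSpace.uniformContinuous_of_continuous _ _ PseudoMetricSpace.toUniformSpace _ _
    _ continuous_cantorMap
  simpa only [cantorMap_surjective.image_preimage] using h.image_of_uniformContinuous hc
end

section
/- Let Y be a topological space and let A be an ω-cover of Y. If A is partitioned into finitely many pieces A = A_0 ∪ ⋯ ∪ A_{k-1} (the pieces pairwise disjoint), then at least one piece A_i is an ω-cover of Y. -/
/-- An ω-cover of a topological space `Y` is a family `A` of open subsets of `Y`
such that `Y` itself is not an element of `A` and every finite subset of `Y` is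
contained in a single element of `A`. -/
def IsOmegaCover {Y : Type*} [TopologicalSpace Y] (A : Set (Set Y)) : Prop :=
  (∀ U ∈ A, IsOpen U) ∧ Set.univ ∉ A ∧
    ∀ F : Set Y, F.Finite → ∃ U ∈ A, F ⊆ U

/-- If an ω-cover is partitioned into finitely many pairwise disjoint pieces, then
at least one of the pieces is an ω-cover. -/
theorem exists_omegaCover_piece {Y : Type*} [TopologicalSpace Y] (A : Set (Set Y))
    (hA : IsOmegaCover A) (k : ℕ) (P : Fin k → Set (Set Y))
    (hdisj : Pairwise (Function.onFun Disjoint P)) (hunion : ⋃ i, P i = A) :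
    ∃ i, IsOmegaCover (P i) := by
  obtain ⟨hopen, huniv, hfin⟩ := hA
  have hsub : ∀ i, P i ⊆ A := fun i => hunion ▸ Set.subset_iUnion P i
  by_contra h
  push_neg at h
  -- for each i, extract a finite set F i not covered by any member of P i
  have hw : ∀ i, ∃ F : Set Y, F.Finite ∧ ∀ U ∈ P i, ¬ F ⊆ U := by
    intro i
    have := h i
    unfold IsOmegaCover at this
    push_neg at this
    exact this (fun U hU => hopen U (hsub i hU)) (fun hu => huniv (hsub i hu))
  choose F hFfin hFnc using hw
  have hbig : (⋃ i, F i).Finite := Set.finite_iUnion hFfin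
  obtain ⟨U, hUA, hUsub⟩ := hfin _ hbig
  rw [← hunion] at hUA
  obtain ⟨s, ⟨i, rfl⟩, hUi⟩ := hUA
  exact hFnc i U hUi ((Set.subset_iUnion F i).trans hUsub)
end

section
/- Let t = (t_n : n ∈ ℕ) be a sequence of finite sets and let (p_n : n ∈ ℕ) be a sequence of elements of P(t) such that p_{n+1} ≤_n p_n for every n ∈ ℕ. Then p := ⋃_{n∈ℕ} p_n (the union of the graphs) is an element of P(t), i.e., p is a partial t-selector whose gap-counting function 𝔤_p is staggered divergent, and p ≤_n p_n for every n ∈ ℕ. -/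
open scoped Classical

/-- The standard interval partition `ζ` of `ℕ`: `[n]_ζ = [n(n+1)/2, (n+1)(n+2)/2)`. -/
def zetaBlock (n : ℕ) : Finset ℕ := Finset.Ico (n * (n + 1) / 2) ((n + 1) * (n + 2) / 2)

/-- Partial functions on `ℕ` are encoded as `p : ℕ → Option α`, where `p k = none`
means `k ∉ dom p`.  The gap-counting function of `p` is `𝔤_p n = |[n]_ζ \ dom p|`. -/
noncomputable def gapCount {α : Type*} (p : ℕ → Option α) (n : ℕ) : ℕ :=
  ((zetaBlock n).filter fun k => p k = none).card

/-- A function `g : ℕ → ℕ` is staggered divergent if it is non-decreasing and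
tends to infinity. -/
def StaggeredDivergent (g : ℕ → ℕ) : Prop :=
  Monotone g ∧ Filter.Tendsto g Filter.atTop Filter.atTop

/-- `p` is a condition of the forcing notion `P(t)`: a partial `t`-selector (a partial
function on `ℕ`, with `p n ∈ t n` whenever `n ∈ dom p`) whose gap-counting function is
staggered divergent. -/
def MemP {α : Type*} (t : ℕ → Finset α) (p : ℕ → Option α) : Prop :=
  (∀ n a, p n = some a → a ∈ t n) ∧ (∃ n, p n = none) ∧ StaggeredDivergent (gapCount p)

/-- `p ≤ q` in `P(t)`: the graph of `p` contains the graph of `q`. -/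
def ExtendsP {α : Type*} (p q : ℕ → Option α) : Prop :=
  ∀ k a, q k = some a → p k = some a

/-- For divergent `g`, `μ_n(g)` is the least `m` with `g m ≥ n`. -/
noncomputable def mu (g : ℕ → ℕ) (n : ℕ) : ℕ := sInf {m | n ≤ g m}

/-- `p ≤_n q` iff `p ≤ q` and `[i]_ζ \ dom q = [i]_ζ \ dom p` for all `i ≤ μ_n(𝔤_q)`. -/
def ExtendsPn {α : Type*} (n : ℕ) (p q : ℕ → Option α) : Prop :=
  ExtendsP p q ∧ ∀ i ≤ mu (gapCount q) n, ∀ k ∈ zetaBlock i, (q k = none ↔ p k = none)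

section Aux
variable {α : Type*}

lemma extendsP_none {p q : ℕ → Option α} (h : ExtendsP p q) {k : ℕ} (hk : p k = none) :
    q k = none := by
  cases hq : q k with
  | none => rfl
  | some a => rw [h k a hq] at hk; exact absurd hk (by simp)

lemma gapCount_le {p q : ℕ → Option α} (h : ExtendsP p q) (n : ℕ) :
    gapCount p n ≤ gapCount q n := by
  apply Finset.card_le_card
  intro k hk
  simp only [Finset.mem_filter] at *
  exact ⟨hk.1, extendsP_none h hk.2⟩

lemma mu_set_nonempty {g : ℕ → ℕ} (hg : Filter.Tendsto g Filter.atTop Filter.atTop) (n : ℕ) :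
    {m | n ≤ g m}.Nonempty := by
  obtain ⟨m, hm⟩ := (Filter.tendsto_atTop.1 hg n).exists
  exact ⟨m, hm⟩

lemma mu_mem {g : ℕ → ℕ} (hg : Filter.Tendsto g Filter.atTop Filter.atTop) (n : ℕ) :
    n ≤ g (mu g n) := Nat.sInf_mem (mu_set_nonempty hg n)

lemma mu_not_lt {g : ℕ → ℕ} {n m : ℕ} (h : m < mu g n) : g m < n := by
  by_contra h'
  have h'' : n ≤ g m := not_lt.mp h'
  have h3 : mu g n ≤ m := Nat.sInf_le h''
  omega

lemma mu_mono {g : ℕ → ℕ} (hg : Filter.Tendsto g Filter.atTop Filter.atTop) {n n' : ℕ}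
    (h : n ≤ n') : mu g n ≤ mu g n' :=
  Nat.sInf_le (le_trans h (mu_mem hg n'))

lemma extends_le {P : ℕ → ℕ → Option α} (hchain : ∀ n, ExtendsPn n (P (n + 1)) (P n))
    {n m : ℕ} (h : n ≤ m) : ExtendsP (P m) (P n) := by
  induction m with
  | zero => rw [Nat.le_zero.mp h]; exact fun k a hk => hk
  | succ m ih =>
    rcases Nat.lt_or_ge n (m + 1) with h' | h'
    · exact fun k a hk => (hchain m).1 k a (ih (Nat.lt_succ_iff.mp h') k a hk)
    · rw [le_antisymm h h']; exact fun k a hk => hk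

end Aux

section Main
variable {α : Type*}

/-- Key fusion claim: blocks `i ≤ μ_n(𝔤_{P n})` are frozen from stage `n` on. -/
lemma frozen_lemma {t : ℕ → Finset α} {P : ℕ → ℕ → Option α}
    (hP : ∀ n, MemP t (P n)) (hchain : ∀ n, ExtendsPn n (P (n + 1)) (P n)) :
    ∀ n m, n ≤ m → ∀ i ≤ mu (gapCount (P n)) n, ∀ k ∈ zetaBlock i,
      (P n k = none ↔ P m k = none) := by
  intro n m hnm
  induction m, hnm using Nat.le_induction with
  | base => exact fun i _ k _ => Iff.rfl
  | succ m hnm ih =>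
    intro i hi k hk
    -- gap counts of P n and P m agree below μ_n(𝔤_{P n})
    have hagree : ∀ j ≤ mu (gapCount (P n)) n, gapCount (P m) j = gapCount (P n) j := by
      intro j hj
      unfold gapCount
      congr 1
      apply Finset.filter_congr
      intro k' hk'
      exact (ih j hj k' hk').symm
    -- hence μ_n(𝔤_{P n}) ≤ μ_n(𝔤_{P m})
    have h1 : mu (gapCount (P n)) n ≤ mu (gapCount (P m)) n := by
      by_contra h
      push_neg at h
      have h2 : n ≤ gapCount (P m) (mu (gapCount (P m)) n) := mu_mem (hP m).2.2.2 n
      rw [hagree _ (le_of_lt h)] at h2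
      exact absurd h2 (not_le.2 (mu_not_lt h))
    have h2 : mu (gapCount (P n)) n ≤ mu (gapCount (P m)) m :=
      le_trans h1 (mu_mono (hP m).2.2.2 hnm)
    exact (ih i hi k hk).trans ((hchain m).2 i (le_trans hi h2) k hk)

theorem fusion_memP' {t : ℕ → Finset α} {P : ℕ → ℕ → Option α}
    (hP : ∀ n, MemP t (P n)) (hchain : ∀ n, ExtendsPn n (P (n + 1)) (P n)) :
    ∃ p : ℕ → Option α,
      (∀ k a, p k = some a ↔ ∃ n, P n k = some a) ∧
      MemP t p ∧
      ∀ n, ExtendsPn n p (P n) := by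
  set p : ℕ → Option α := fun k =>
    if h : ∃ n, P n k ≠ none then P (Nat.find h) k else none with hp
  have hdiv : ∀ n, Filter.Tendsto (gapCount (P n)) Filter.atTop Filter.atTop :=
    fun n => (hP n).2.2.2
  -- characterization of p k = none
  have hpnone : ∀ k, p k = none ↔ ∀ n, P n k = none := by
    intro k
    constructor
    · intro h n
      by_contra hn
      rw [hp] at h
      simp only [dif_pos (⟨n, hn⟩ : ∃ n, P n k ≠ none)] at h
      exact Nat.find_spec (⟨n, hn⟩ : ∃ n, P n k ≠ none) h
    · intro h
      rw [hp]
      simp only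
      rw [dif_neg]
      push_neg
      exact h
  -- characterization of p k = some a
  have hpsome : ∀ k a, p k = some a ↔ ∃ n, P n k = some a := by
    intro k a
    constructor
    · intro h
      have hex : ∃ n, P n k ≠ none := by
        by_contra hc
        push_neg at hc
        rw [(hpnone k).2 hc] at h
        exact absurd h (by simp)
      refine ⟨Nat.find hex, ?_⟩
      rw [hp] at h
      simpa only [dif_pos hex] using h
    · rintro ⟨n, hn⟩
      have hex : ∃ n, P n k ≠ none := ⟨n, by simp [hn]⟩
      have hval : p k = P (Nat.find hex) k := by rw [hp]; simp only [dif_pos hex]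
      cases hb : P (Nat.find hex) k with
      | none => exact absurd hb (Nat.find_spec hex)
      | some b =>
        rw [hval, hb]
        rcases le_total n (Nat.find hex) with hle | hle
        · rw [extends_le hchain hle k a hn] at hb
          exact hb.symm
        · rw [extends_le hchain hle k b hb] at hn
          exact hn
  -- p extends each P n
  have hext : ∀ n, ExtendsP p (P n) := fun n k a hk => (hpsome k a).2 ⟨n, hk⟩
  -- frozen blocks for p
  have hfrozen : ∀ n, ∀ i ≤ mu (gapCount (P n)) n, ∀ k ∈ zetaBlock i,
      (P n k = none ↔ p k = none) := by
    intro n i hi k hk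
    constructor
    · intro h
      rw [hpnone]
      intro m
      rcases le_total n m with hnm | hmn
      · exact (frozen_lemma hP hchain n m hnm i hi k hk).1 h
      · exact extendsP_none (extends_le hchain hmn) h
    · intro h
      exact extendsP_none (hext n) h
  -- gap counts of p and P n agree below μ_n(𝔤_{P n})
  have hagree : ∀ n, ∀ j ≤ mu (gapCount (P n)) n, gapCount p j = gapCount (P n) j := by
    intro n j hj
    unfold gapCount
    congr 1
    apply Finset.filter_congr
    intro k' hk'
    exact (hfrozen n j hj k' hk').symm
  -- μ_n(𝔤_{P n}) is unbounded in n
  have hmu_unbdd : ∀ b, ∃ n, b ≤ mu (gapCount (P n)) n := by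
    intro b
    refine ⟨gapCount (P 0) b + 1, ?_⟩
    by_contra h
    push_neg at h
    set n := gapCount (P 0) b + 1
    have hmem : n ≤ gapCount (P n) (mu (gapCount (P n)) n) := mu_mem (hdiv n) n
    have hle : gapCount (P n) (mu (gapCount (P n)) n) ≤ gapCount (P 0) b :=
      le_trans (gapCount_le (extends_le hchain (Nat.zero_le n)) _)
        ((hP 0).2.2.1 (le_of_lt h))
    omega
  -- monotone
  have hmono : Monotone (gapCount p) := by
    intro a b hab
    obtain ⟨n, hn⟩ := hmu_unbdd b
    rw [hagree n a (le_trans hab hn), hagree n b hn]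
    exact (hP n).2.2.1 hab
  -- unbounded values of gapCount p
  have hvals : ∀ n, n ≤ gapCount p (mu (gapCount (P n)) n) := by
    intro n
    rw [hagree n _ le_rfl]
    exact mu_mem (hdiv n) n
  refine ⟨p, hpsome, ⟨?_, ?_, hmono, ?_⟩, fun n => ⟨hext n, hfrozen n⟩⟩
  · intro k a hk
    obtain ⟨n, hn⟩ := (hpsome k a).1 hk
    exact (hP n).1 k a hn
  · -- ∃ k, p k = none
    have h1 : 1 ≤ gapCount p (mu (gapCount (P 1)) 1) := hvals 1
    unfold gapCount at h1
    obtain ⟨k, hk⟩ := Finset.card_pos.mp (lt_of_lt_of_le Nat.zero_lt_one h1)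
    exact ⟨k, (Finset.mem_filter.mp hk).2⟩
  · exact Filter.tendsto_atTop_atTop_of_monotone hmono fun b => ⟨_, hvals b⟩

end Main

/-- If `(p_n)` is a sequence of conditions in `P(t)` with `p_{n+1} ≤_n p_n`, then the
union `p` of their graphs is a (total function on the union of the domains, hence a
well-defined) condition of `P(t)`, and `p ≤_n p_n` for every `n`. -/
theorem fusion_memP {α : Type*} (t : ℕ → Finset α) (P : ℕ → ℕ → Option α)
    (hP : ∀ n, MemP t (P n)) (hchain : ∀ n, ExtendsPn n (P (n + 1)) (P n)) :
    ∃ p : ℕ → Option α,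
      (∀ k a, p k = some a ↔ ∃ n, P n k = some a) ∧
      MemP t p ∧
      ∀ n, ExtendsPn n p (P n) := by
  exact fusion_memP' hP hchain
end

section
/- Let (A_n : n ∈ ℕ) be a sequence of ω-covers of the Cantor space ℕ → Bool (with the product topology). Then there exists a sequence (t_n : n ∈ ℕ) of finite sets such that for every n, t_n ⊆ A_n, t_n covers the Cantor space (i.e., ⋃ t_n = ℕ → Bool), and the sets t_n are pairwise disjoint. -/
/-- Key step: an ω-cover admits a finite subcover avoiding any given finite
family of non-`univ` sets. -/
theorem omega_key (A : Set (Set (ℕ → Bool))) (hA : IsOmegaCover A)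
    (s : Set (Set (ℕ → Bool))) (hs : s.Finite)
    (hsu : ∀ V ∈ s, V ≠ Set.univ) :
    ∃ t : Set (Set (ℕ → Bool)), t.Finite ∧ t ⊆ A ∧ (∀ V ∈ t, V ∉ s) ∧
      ⋃₀ t = Set.univ := by
  classical
  obtain ⟨hopen, huniv, hcov⟩ := hA
  have hw : ∀ V ∈ s, ∃ x, x ∉ V := fun V hV =>
    (Set.ne_univ_iff_exists_notMem V).mp (hsu V hV)
  choose! w hwspec using hw
  have hWfin : (w '' s).Finite := hs.image w
  have hcover : ∀ x : ℕ → Bool, ∃ U ∈ A \ s, x ∈ U := by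
    intro x
    obtain ⟨U, hU, hsub⟩ := hcov (insert x (w '' s)) (hWfin.insert x)
    refine ⟨U, ⟨hU, ?_⟩, hsub (Set.mem_insert x _)⟩
    intro hUs
    exact hwspec U hUs (hsub (Set.mem_insert_of_mem _ ⟨U, hUs, rfl⟩))
  have hcov2 : (Set.univ : Set (ℕ → Bool)) ⊆
      ⋃ U : (A \ s : Set (Set (ℕ → Bool))), (U : Set (ℕ → Bool)) := by
    intro x _
    obtain ⟨U, hU, hx⟩ := hcover x
    exact Set.mem_iUnion.mpr ⟨⟨U, hU⟩, hx⟩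
  obtain ⟨F, hF⟩ := isCompact_univ.elim_finite_subcover
    (fun U : (A \ s : Set (Set (ℕ → Bool))) => (U : Set (ℕ → Bool)))
    (fun U => hopen U U.2.1) hcov2
  refine ⟨Subtype.val '' (F : Set (A \ s : Set (Set (ℕ → Bool)))), ?_, ?_, ?_, ?_⟩
  · exact F.finite_toSet.image _
  · rintro _ ⟨U, _, rfl⟩; exact U.2.1
  · rintro _ ⟨U, _, rfl⟩; exact U.2.2
  · apply Set.eq_univ_of_univ_subset
    intro x hx
    obtain ⟨U, hUF, hxU⟩ := Set.mem_iUnion₂.mp (hF (Set.mem_univ x))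
    exact ⟨U, ⟨U, hUF, rfl⟩, hxU⟩

/-- Given a sequence of ω-covers of the Cantor space, one can extract pairwise
disjoint finite subfamilies, each of which still covers the Cantor space. -/
theorem exists_disjoint_finite_subcovers (A : ℕ → Set (Set (ℕ → Bool)))
    (hA : ∀ n, IsOmegaCover (A n)) :
    ∃ t : ℕ → Set (Set (ℕ → Bool)),
      (∀ n, (t n).Finite) ∧
      (∀ n, t n ⊆ A n) ∧
      (∀ n, ⋃₀ t n = Set.univ) ∧
      Pairwise (Function.onFun Disjoint t) := by
  classical
  have key := fun n => omega_key (A n) (hA n)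
  choose! f hfin hsub hnot hcov using key
  -- pair (t n, accumulated used sets up to n)
  set g : ℕ → Set (Set (ℕ → Bool)) × Set (Set (ℕ → Bool)) :=
    fun n => Nat.rec (f 0 ∅, f 0 ∅)
      (fun k p => (f (k + 1) p.2, p.2 ∪ f (k + 1) p.2)) n with hg
  have hne : ∀ n, ∀ V ∈ A n, V ≠ Set.univ := by
    intro n V hV h
    exact (hA n).2.1 (h ▸ hV)
  -- invariant
  have inv : ∀ n, (g n).2.Finite ∧ (∀ V ∈ (g n).2, V ≠ Set.univ) ∧
      (g n).1 ⊆ A n ∧ (∀ V ∈ (g n).1, V ∉ (if n = 0 then (∅ : Set (Set (ℕ → Bool))) else (g (n - 1)).2)) ∧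
      (g n).1 ⊆ (g n).2 := by
    intro n
    induction n with
    | zero =>
      have h1 : (∅ : Set (Set (ℕ → Bool))).Finite := Set.finite_empty
      have h2 : ∀ V ∈ (∅ : Set (Set (ℕ → Bool))), V ≠ Set.univ := by simp
      refine ⟨?_, ?_, hsub 0 ∅ h1 h2, ?_, ?_⟩
      · exact hfin 0 ∅ h1 h2
      · intro V hV; exact hne 0 V (hsub 0 ∅ h1 h2 hV)
      · simp [hnot 0 ∅ h1 h2]
      · exact subset_rfl
    | succ k ih =>
      obtain ⟨ihfin, ihne, _, _, _⟩ := ih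
      have h1 := hfin (k + 1) _ ihfin ihne
      have h2 := hsub (k + 1) _ ihfin ihne
      have h3 := hnot (k + 1) _ ihfin ihne
      refine ⟨ihfin.union h1, ?_, h2, ?_, ?_⟩
      · intro V hV
        rcases hV with hV | hV
        · exact ihne V hV
        · exact hne (k + 1) V (h2 hV)
      · simpa using h3
      · intro V hV; exact Or.inr hV
  -- accumulation is monotone and contains all earlier t's
  have mono : ∀ m n, m ≤ n → (g m).2 ⊆ (g n).2 := by
    intro m n hmn
    induction hmn with
    | refl => exact subset_rfl
    | step h ih => exact ih.trans (fun V hV => Or.inl hV)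
  have hdisj : ∀ m n, m < n → Disjoint ((g m).1) ((g n).1) := by
    intro m n hmn
    rw [Set.disjoint_left]
    intro V hVm hVn
    obtain ⟨k, rfl⟩ := Nat.exists_eq_add_of_lt hmn
    have h4 := (inv (m + k + 1)).2.2.2.1
    simp only [Nat.add_sub_cancel] at h4
    have : V ∈ (g (m + k)).2 := mono m (m + k) (Nat.le_add_right _ _) ((inv m).2.2.2.2 hVm)
    have hV' := h4 V hVn
    rw [if_neg (Nat.succ_ne_zero _)] at hV'
    exact hV' this
  refine ⟨fun n => (g n).1, ?_, fun n => (inv n).2.2.1, ?_, ?_⟩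
  · intro n
    cases n with
    | zero => exact hfin 0 ∅ Set.finite_empty (by simp)
    | succ k => exact hfin (k + 1) _ (inv k).1 (inv k).2.1
  · intro n
    cases n with
    | zero => exact hcov 0 ∅ Set.finite_empty (by simp)
    | succ k => exact hcov (k + 1) _ (inv k).1 (inv k).2.1
  · intro m n hmn
    rcases hmn.lt_or_gt with h | h
    · exact hdisj m n h
    · exact (hdisj n m h).symm
end

section
/- Let C be the Cantor space ℕ → Bool with the product topology, and let t = (t_n : n ∈ ℕ) be a sequence of pairwise disjoint finite sets of open subsets of C such that each t_n covers C. Then for every n ∈ ℕ, the set D_n := {p ∈ P(t) : n ∈ dom p} is a dense open subset of the partially ordered set P(t). -/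
open scoped Classical

/-!
Openness is immediate, since extending a condition keeps `n` in its domain. For density, fill
every gap below the right end `(n+1)(n+2)/2 > n` of the block `[n]_ζ`. The gap-counting
function of the extension vanishes on the blocks `i ≤ n` and agrees with the old one above, so
it is still non-decreasing and divergent.
-/

lemma lt_zetaBound_of_mem_zetaBlock {i m k : ℕ} (him : i ≤ m) (hk : k ∈ zetaBlock i) :
    k < (m + 1) * (m + 2) / 2 :=
  (Finset.mem_Ico.mp hk).2.trans_le <|
    Nat.div_le_div_right (Nat.mul_le_mul (by omega) (by omega))

lemma zetaBound_le_of_mem_zetaBlock {i m k : ℕ} (hmi : m < i) (hk : k ∈ zetaBlock i) :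
    (m + 1) * (m + 2) / 2 ≤ k :=
  (Nat.div_le_div_right (Nat.mul_le_mul (by omega) (by omega))).trans (Finset.mem_Ico.mp hk).1

lemma lt_zetaBound (n : ℕ) : n < (n + 1) * (n + 2) / 2 :=
  (Nat.le_div_iff_mul_le two_pos).mpr (by nlinarith)

lemma StaggeredDivergent.of_eq_zero_of_eq {g g' : ℕ → ℕ} (hg : StaggeredDivergent g) {m : ℕ}
    (hlow : ∀ i ≤ m, g' i = 0) (hhigh : ∀ i, m < i → g' i = g i) :
    StaggeredDivergent g' := by
  refine ⟨fun i j hij => ?_, ?_⟩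
  · rcases le_or_gt i m with hi | hi
    · simp [hlow i hi]
    · rw [hhigh i hi, hhigh j (hi.trans_le hij)]
      exact hg.1 hij
  · refine hg.2.congr' ?_
    filter_upwards [Filter.eventually_gt_atTop m] with i hi
    exact (hhigh i hi).symm

lemma exists_eq_none_of_tendsto_gapCount {α : Type*} {p : ℕ → Option α}
    (hp : Filter.Tendsto (gapCount p) Filter.atTop Filter.atTop) : ∃ k, p k = none := by
  obtain ⟨i, hi⟩ := (hp.eventually_ge_atTop 1).exists
  obtain ⟨k, hk⟩ := Finset.card_pos.mp hi
  exact ⟨k, (Finset.mem_filter.mp hk).2⟩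

section FillBelow

variable {α : Type*}

def fillBelow (q : ℕ → Option α) (f : ℕ → α) (N : ℕ) (k : ℕ) : Option α :=
  if k < N then some ((q k).getD (f k)) else q k

variable {q : ℕ → Option α} {f : ℕ → α}

lemma fillBelow_eq_none_iff {N k : ℕ} : fillBelow q f N k = none ↔ N ≤ k ∧ q k = none := by
  unfold fillBelow
  split_ifs with h
  · simp [h]
  · simp [not_lt.mp h]

lemma extendsP_fillBelow (N : ℕ) : ExtendsP (fillBelow q f N) q := by
  intro k a hk
  unfold fillBelow
  split_ifs <;> simp [hk]

lemma eq_some_or_of_fillBelow_eq_some {N k : ℕ} {a : α} (h : fillBelow q f N k = some a) :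
    q k = some a ∨ f k = a := by
  unfold fillBelow at h
  split_ifs at h
  · cases hqk : q k <;> simp_all
  · exact Or.inl h

lemma gapCount_fillBelow_of_le {m i : ℕ} (him : i ≤ m) :
    gapCount (fillBelow q f ((m + 1) * (m + 2) / 2)) i = 0 := by
  refine Finset.card_eq_zero.mpr (Finset.filter_eq_empty_iff.mpr fun k hk hkn => ?_)
  exact (lt_zetaBound_of_mem_zetaBlock him hk).not_ge (fillBelow_eq_none_iff.mp hkn).1

lemma gapCount_fillBelow_of_lt {m i : ℕ} (hmi : m < i) :
    gapCount (fillBelow q f ((m + 1) * (m + 2) / 2)) i = gapCount q i := by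
  refine congrArg Finset.card (Finset.filter_congr fun k hk => ?_)
  simp [fillBelow_eq_none_iff, zetaBound_le_of_mem_zetaBlock hmi hk]

lemma memP_fillBelow {t : ℕ → Finset α} (hq : MemP t q) (hf : ∀ k, f k ∈ t k) (m : ℕ) :
    MemP t (fillBelow q f ((m + 1) * (m + 2) / 2)) := by
  have hdiv : StaggeredDivergent (gapCount (fillBelow q f ((m + 1) * (m + 2) / 2))) :=
    hq.2.2.of_eq_zero_of_eq (fun _ => gapCount_fillBelow_of_le)
      (fun _ => gapCount_fillBelow_of_lt)
  refine ⟨fun k a hk => ?_, exists_eq_none_of_tendsto_gapCount hdiv.2, hdiv⟩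
  rcases eq_some_or_of_fillBelow_eq_some hk with hqk | rfl
  exacts [hq.1 k a hqk, hf k]

end FillBelow

theorem denseOpen_Dn_general (t : ℕ → Finset (Set (ℕ → Bool)))
    (hcover : ∀ n, ⋃₀ (t n : Set (Set (ℕ → Bool))) = Set.univ)
    (n : ℕ) :
    (∀ p q, MemP t p → MemP t q → ExtendsP q p → p n ≠ none → q n ≠ none) ∧
    (∀ q, MemP t q → ∃ p, MemP t p ∧ ExtendsP p q ∧ p n ≠ none) := by
  refine ⟨fun p q _ _ hqp hpn => ?_, fun q hq => ?_⟩
  · obtain ⟨a, ha⟩ := Option.ne_none_iff_exists'.mp hpn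
    simp [hqp n a ha]
  · choose f hf using fun k => Set.Nonempty.of_sUnion_eq_univ (hcover k)
    exact ⟨_, memP_fillBelow hq hf n, extendsP_fillBelow _,
      fun hn => (lt_zetaBound n).not_ge (fillBelow_eq_none_iff.mp hn).1⟩

/-- Let `t` be a sequence of pairwise disjoint finite sets of open subsets of the Cantor
space, each covering the Cantor space.  For every `n`, the set
`D_n = {p ∈ P(t) : n ∈ dom p}` is a dense open subset of `P(t)`. -/
theorem denseOpen_Dn (t : ℕ → Finset (Set (ℕ → Bool)))
    (hopen : ∀ n, ∀ U ∈ t n, IsOpen U)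
    (hcover : ∀ n, ⋃₀ (t n : Set (Set (ℕ → Bool))) = Set.univ)
    (hdisj : Pairwise (Function.onFun Disjoint t)) (n : ℕ) :
    (∀ p q, MemP t p → MemP t q → ExtendsP q p → p n ≠ none → q n ≠ none) ∧
    (∀ q, MemP t q → ∃ p, MemP t p ∧ ExtendsP p q ∧ p n ≠ none) :=
  denseOpen_Dn_general t hcover n
end

section
/- Let C be the Cantor space ℕ → Bool with the product topology, and let t = (t_n : n ∈ ℕ) be a sequence of pairwise disjoint finite sets of open subsets of C such that each t_n covers C. Then for every x ∈ C, the set E_x := {p ∈ P(t) : ∃ N ∈ ℕ, ∀ n ≥ N, ∃ k ∈ [n]_ζ ∩ dom p with x ∈ p(k)} is a dense open subset of the partially ordered set P(t). -/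
open scoped Classical

/-- Membership in `E_x`: there is `N` such that for every `n ≥ N` there is
`k ∈ [n]_ζ ∩ dom p` with `x ∈ p(k)`. -/
def MemEx (x : ℕ → Bool) (p : ℕ → Option (Set (ℕ → Bool))) : Prop :=
  ∃ N : ℕ, ∀ n ≥ N, ∃ k ∈ zetaBlock n, ∃ U, p k = some U ∧ x ∈ U

lemma zetaBlock_endpoint_mono : Monotone (fun n => n * (n + 1) / 2) := fun a b h =>
  Nat.div_le_div_right (Nat.mul_le_mul h (Nat.succ_le_succ h))

lemma zetaBlock_inj {k n m : ℕ} (hn : k ∈ zetaBlock n) (hm : k ∈ zetaBlock m) : n = m := by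
  simp only [zetaBlock, Finset.mem_Ico] at hn hm
  by_contra h
  rcases Nat.lt_or_ge n m with h1 | h1
  · have h3 : (n + 1) * (n + 1 + 1) / 2 ≤ m * (m + 1) / 2 := zetaBlock_endpoint_mono h1
    rw [show n + 1 + 1 = n + 2 from rfl] at h3
    omega
  · have h2 : m < n := lt_of_le_of_ne h1 (Ne.symm h)
    have h3 : (m + 1) * (m + 1 + 1) / 2 ≤ n * (n + 1) / 2 := zetaBlock_endpoint_mono h2
    rw [show m + 1 + 1 = m + 2 from rfl] at h3
    omega

/-- Let `t` be a sequence of pairwise disjoint finite sets of open subsets of the Cantor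
space, each covering the Cantor space.  For every point `x` of the Cantor space, the set
`E_x = {p ∈ P(t) : ∃ N, ∀ n ≥ N, ∃ k ∈ [n]_ζ ∩ dom p, x ∈ p(k)}` is a dense open
subset of `P(t)`. -/
theorem denseOpen_Ex (t : ℕ → Finset (Set (ℕ → Bool)))
    (hopen : ∀ n, ∀ U ∈ t n, IsOpen U)
    (hcover : ∀ n, ⋃₀ (t n : Set (Set (ℕ → Bool))) = Set.univ)
    (hdisj : Pairwise (Function.onFun Disjoint t)) (x : ℕ → Bool) :
    (∀ p q, MemP t p → MemP t q → ExtendsP q p → MemEx x p → MemEx x q) ∧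
    (∀ q, MemP t q → ∃ p, MemP t p ∧ ExtendsP p q ∧ MemEx x p) := by
  constructor
  · rintro p q _ _ hqp ⟨N, hN⟩
    refine ⟨N, fun n hn => ?_⟩
    obtain ⟨k, hk, U, hU, hxU⟩ := hN n hn
    exact ⟨k, hk, U, hqp k U hU, hxU⟩
  · intro q hq
    obtain ⟨hsel, -, hmono, htend⟩ := hq
    set g := gapCount q with hg
    -- Choose N : a point where g jumps and g N ≥ 2
    have hNE : {m | g 0 + 2 ≤ g m}.Nonempty := by
      obtain ⟨m, hm⟩ := (Filter.tendsto_atTop.1 htend (g 0 + 2)).exists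
      exact ⟨m, hm⟩
    set N := sInf {m | g 0 + 2 ≤ g m} with hNdef
    have hNmem : g 0 + 2 ≤ g N := Nat.sInf_mem hNE
    have hNpos : 0 < N := by
      rcases Nat.eq_zero_or_pos N with h | h
      · exfalso; rw [h] at hNmem; omega
      · exact h
    have hPrev : g (N - 1) < g 0 + 2 := by
      by_contra h
      have := Nat.sInf_le (show N - 1 ∈ {m | g 0 + 2 ≤ g m} from not_lt.1 h)
      omega
    have hgeN : ∀ n, N ≤ n → g 0 + 2 ≤ g n := fun n hn => hNmem.trans (hmono hn)
    -- choose gaps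
    have hgap : ∀ n, ∃ k, N ≤ n → k ∈ zetaBlock n ∧ q k = none := by
      intro n
      by_cases hn : N ≤ n
      · have h2 : 0 < g n := by have := hgeN n hn; omega
        rw [hg, gapCount, Finset.card_pos] at h2
        obtain ⟨k, hk⟩ := h2
        simp only [Finset.mem_filter] at hk
        exact ⟨k, fun _ => hk⟩
      · exact ⟨0, fun h => absurd h hn⟩
    choose k hk using hgap
    -- choose open sets containing x
    have hUx : ∀ m, ∃ U, U ∈ t m ∧ x ∈ U := by
      intro m
      have : x ∈ ⋃₀ (t m : Set (Set (ℕ → Bool))) := by rw [hcover m]; trivial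
      obtain ⟨U, hU, hxU⟩ := this
      exact ⟨U, by exact_mod_cast hU, hxU⟩
    choose U hUt hxU using hUx
    set p : ℕ → Option (Set (ℕ → Bool)) :=
      fun j => if ∃ n, N ≤ n ∧ j = k n then some (U j) else q j with hp
    -- key: in a block, the fill condition localizes
    have hloc : ∀ i j, j ∈ zetaBlock i → ((∃ n, N ≤ n ∧ j = k n) ↔ (N ≤ i ∧ j = k i)) := by
      intro i j hj
      constructor
      · rintro ⟨n, hn, rfl⟩
        have := zetaBlock_inj ((hk n hn).1) hj
        subst this
        exact ⟨hn, rfl⟩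
      · rintro ⟨h1, h2⟩; exact ⟨i, h1, h2⟩
    have hpg : ∀ i, gapCount p i = if N ≤ i then g i - 1 else g i := by
      intro i
      by_cases hi : N ≤ i
      · rw [if_pos hi]
        have : (zetaBlock i).filter (fun j => p j = none) =
            ((zetaBlock i).filter (fun j => q j = none)).erase (k i) := by
          ext j
          simp only [Finset.mem_filter, Finset.mem_erase]
          constructor
          · rintro ⟨hj, hpj⟩
            rw [hp] at hpj
            simp only at hpj
            by_cases hc : ∃ n, N ≤ n ∧ j = k n
            · rw [if_pos hc] at hpj; exact absurd hpj (by simp)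
            · rw [if_neg hc] at hpj
              refine ⟨fun hjk => hc ⟨i, hi, hjk⟩, hj, hpj⟩
          · rintro ⟨hne, hj, hqj⟩
            refine ⟨hj, ?_⟩
            rw [hp]; simp only
            rw [if_neg fun hc => hne (((hloc i j hj).1 hc).2)]
            exact hqj
        rw [gapCount, this, Finset.card_erase_of_mem (by
          simp only [Finset.mem_filter]
          exact ⟨(hk i hi).1, (hk i hi).2⟩)]
        rfl
      · rw [if_neg hi]
        have : (zetaBlock i).filter (fun j => p j = none) =
            (zetaBlock i).filter (fun j => q j = none) := by
          apply Finset.filter_congr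
          intro j hj
          rw [hp]; simp only
          rw [if_neg fun hc => hi ((hloc i j hj).1 hc).1]
        rw [gapCount, this]; rfl
    refine ⟨p, ⟨?_, ?_, ?_, ?_⟩, ?_, ?_⟩
    · -- selector
      intro n a ha
      rw [hp] at ha
      simp only at ha
      by_cases hc : ∃ m, N ≤ m ∧ n = k m
      · rw [if_pos hc] at ha
        obtain rfl : U n = a := by injection ha
        exact hUt n
      · rw [if_neg hc] at ha
        exact hsel n a ha
    · -- somewhere undefined
      have h2 : 0 < gapCount p N := by
        rw [hpg N, if_pos le_rfl]; have := hgeN N le_rfl; omega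
      rw [gapCount, Finset.card_pos] at h2
      obtain ⟨j, hj⟩ := h2
      simp only [Finset.mem_filter] at hj
      exact ⟨j, hj.2⟩
    · -- monotone
      intro a b hab
      rw [hpg a, hpg b]
      by_cases ha : N ≤ a
      · rw [if_pos ha, if_pos (ha.trans hab)]
        exact Nat.sub_le_sub_right (hmono hab) 1
      · rw [if_neg ha]
        by_cases hb : N ≤ b
        · rw [if_pos hb]
          have h1 : g a ≤ g (N - 1) := hmono (by omega)
          have h2 := hgeN b hb
          omega
        · rw [if_neg hb]; exact hmono hab
    · -- tendsto
      rw [Filter.tendsto_atTop]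
      intro b
      filter_upwards [Filter.tendsto_atTop.1 htend (b + 1)] with n hn
      rw [hpg n]
      split <;> omega
    · -- extends
      intro j a ha
      rw [hp]; simp only
      rw [if_neg]
      · exact ha
      · rintro ⟨n, hn, rfl⟩
        rw [(hk n hn).2] at ha
        exact absurd ha (by simp)
    · -- MemEx
      refine ⟨N, fun n hn => ⟨k n, (hk n hn).1, U (k n), ?_, hxU (k n)⟩⟩
      rw [hp]; simp only
      rw [if_pos ⟨n, hn, rfl⟩]
end

section
/- Let C be the Cantor space ℕ → Bool with the product topology, and let t = (t_n : n ∈ ℕ) be a sequence of pairwise disjoint finite sets of open subsets of C such that each t_n covers C. Let G be a filter on the partially ordered set P(t) that intersects, for every n ∈ ℕ, the set D_n := {p ∈ P(t) : n ∈ dom p}, and, for every x ∈ C, the set E_x := {p ∈ P(t) : ∃ N ∈ ℕ, ∀ n ≥ N, ∃ k ∈ [n]_ζ ∩ dom p with x ∈ p(k)}. Then φ_G := ⋃ G (the union of the graphs of the conditions in G) is a function with domain all of ℕ; φ_G(n) ∈ t_n for every n ∈ ℕ (in particular φ_G is one-to-one); and every x ∈ C belongs to ⋃{φ_G(k) : k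 ∈ [n]_ζ} for all but finitely many n ∈ ℕ. -/
open scoped Classical

/-- Let `t` be a sequence of pairwise disjoint finite sets of open subsets of the Cantor
space, each covering the Cantor space, and let `G` be a filter on `P(t)` meeting every
`D_n` and every `E_x`.  Then `φ_G = ⋃ G` is a total function, `φ_G n ∈ t n` for every
`n` (so `φ_G` is one-to-one), and every `x` in the Cantor space belongs to
`⋃ {φ_G(k) : k ∈ [n]_ζ}` for all but finitely many `n`. -/
theorem generic_function (t : ℕ → Finset (Set (ℕ → Bool)))
    (hopen : ∀ n, ∀ U ∈ t n, IsOpen U)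
    (hcover : ∀ n, ⋃₀ (t n : Set (Set (ℕ → Bool))) = Set.univ)
    (hdisj : Pairwise (Function.onFun Disjoint t))
    (G : Set (ℕ → Option (Set (ℕ → Bool))))
    (hGP : ∀ p ∈ G, MemP t p)
    (hGup : ∀ p ∈ G, ∀ q, MemP t q → ExtendsP p q → q ∈ G)
    (hGdir : ∀ p ∈ G, ∀ q ∈ G, ∃ r ∈ G, ExtendsP r p ∧ ExtendsP r q)
    (hGD : ∀ n : ℕ, ∃ p ∈ G, p n ≠ none)
    (hGE : ∀ x : ℕ → Bool, ∃ p ∈ G, MemEx x p) :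
    ∃ φ : ℕ → Set (ℕ → Bool),
      (∀ n U, φ n = U ↔ ∃ p ∈ G, p n = some U) ∧
      (∀ n, φ n ∈ t n) ∧
      Function.Injective φ ∧
      ∀ x : ℕ → Bool, ∀ᶠ n in Filter.atTop, x ∈ ⋃ k ∈ zetaBlock n, φ k := by
  have uniq : ∀ n U V, (∃ p ∈ G, p n = some U) → (∃ q ∈ G, q n = some V) → U = V := by
    rintro n U V ⟨p, hp, hpU⟩ ⟨q, hq, hqV⟩
    obtain ⟨r, hr, hrp, hrq⟩ := hGdir p hp q hq
    have h1 := hrp n U hpU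
    have h2 := hrq n V hqV
    rw [h1] at h2
    exact Option.some_injective _ h2
  have hex : ∀ n, ∃ U, ∃ p ∈ G, p n = some U := by
    intro n
    obtain ⟨p, hp, hpn⟩ := hGD n
    obtain ⟨U, hU2⟩ := Option.ne_none_iff_exists'.mp hpn
    exact ⟨U, p, hp, hU2⟩
  choose U hU using hex
  have hspec : ∀ n V, U n = V ↔ ∃ p ∈ G, p n = some V := by
    intro n V
    constructor
    · rintro rfl; exact hU n
    · intro h; exact uniq n (U n) V (hU n) h
  have hmem : ∀ n, U n ∈ t n := by
    intro n
    obtain ⟨p, hp, hpn⟩ := hU n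
    exact (hGP p hp).1 n (U n) hpn
  refine ⟨U, hspec, hmem, ?_, ?_⟩
  · intro n m h
    by_contra hnm
    exact (Finset.disjoint_left.mp (hdisj hnm)) (hmem n) (h ▸ hmem m)
  · intro x
    obtain ⟨p, hp, N, hN⟩ := hGE x
    rw [Filter.eventually_atTop]
    refine ⟨N, fun n hn => ?_⟩
    obtain ⟨k, hk, V, hpk, hxV⟩ := hN n hn
    have : U k = V := uniq k (U k) V (hU k) ⟨p, hp, hpk⟩
    exact Set.mem_biUnion hk (this ▸ hxV)
end

section
/- Let C be the Cantor space ℕ → Bool with its standard metric, and let X ⊆ C. Suppose the selection principle S₁(Ω[C], GΛ[X|C]) holds, i.e., for every sequence (A_n : n ∈ ℕ) of ω-covers of C there exist open sets U_n ∈ A_n (n ∈ ℕ) such that the family {U_n : n ∈ ℕ} is a λ-groupable cover of X|C. Then X has sharp measure zero. -/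
-- The Cantor space `ℕ → Bool` carries the metric `dist x y = (1/2)^n`, where `n` is the
-- least index at which `x` and `y` differ; it induces the product topology.
attribute [local instance] PiNat.metricSpace

/-- `A` is a λ-groupable cover of `X|Y`: an infinite family of open subsets of `Y`
covering `X`, admitting a partition into finite pieces such that every `x ∈ X`
belongs to the union of all but finitely many of the pieces. -/
def IsLambdaGroupableCover {Y : Type*} [TopologicalSpace Y] (X : Set Y)
    (A : Set (Set Y)) : Prop :=
  (∀ U ∈ A, IsOpen U) ∧ A.Infinite ∧ X ⊆ ⋃₀ A ∧
    ∃ π : Set Y → ℕ, (∀ n, {U ∈ A | π U = n}.Finite) ∧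
      ∀ x ∈ X, ∀ᶠ n in Filter.atTop, x ∈ ⋃₀ {U ∈ A | π U = n}

/-- A subset `X` of a metric space `Y` has sharp measure zero if for every sequence
`(ε n)` of positive reals there are a sequence `(U n)` of subsets of `Y` with
`diam (U n) ≤ ε n` for every `n` whose union covers `X`, together with a map
`π : ℕ → ℕ` with finite fibers such that every `x ∈ X` belongs to
`⋃ {U k : π k = m}` for all but finitely many `m`. -/
def HasSharpMeasureZero {Y : Type*} [MetricSpace Y] (X : Set Y) : Prop :=
  ∀ ε : ℕ → ℝ, (∀ n, 0 < ε n) →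
    ∃ (U : ℕ → Set Y) (π : ℕ → ℕ),
      (∀ n, EMetric.diam (U n) ≤ ENNReal.ofReal (ε n)) ∧ X ⊆ ⋃ n, U n ∧
      (∀ m, (π ⁻¹' {m}).Finite) ∧
      ∀ x ∈ X, ∀ᶠ m in Filter.atTop, x ∈ ⋃ k ∈ π ⁻¹' {m}, U k

/-!
Given `ε`, choose depths `ℓ k` with `2⁻¹ ^ ℓ k ≤ ε k` and `ℓ k > k`. For each `n`, the finite
unions over `j ∈ s` of the cylinders of depth `ℓ ⟨n, j⟩` around points `c j` form an ω-cover of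
the Cantor space: since the depth of the `j`-th cylinder exceeds `j`, the diagonal point
`i ↦ ¬ c i i` avoids every such union. A selection `U n` from these covers is λ-groupable; splitting each `U n` into its
cylinders, indexed by `⟨n, j⟩`, keeps the grouping and yields pieces of diameter at most `ε`.
-/

open Set Filter PiNat

section LambdaGroupable

variable {Y : Type*}

/-- The indexed analogue of `IsLambdaGroupableCover`, where the pieces of the partition are
groups of indices rather than of sets. -/
def IsLambdaGroupableSeq (X : Set Y) (U : ℕ → Set Y) : Prop :=
  ∃ π : ℕ → ℕ, (∀ m, (π ⁻¹' {m}).Finite) ∧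
    ∀ x ∈ X, ∀ᶠ m in atTop, x ∈ ⋃ k ∈ π ⁻¹' {m}, U k

variable {X : Set Y} {U : ℕ → Set Y}

/-- Indices sharing the same set `U n` are grouped only through the representative
`Function.invFun U (U n)`; all other indices get singleton groups. -/
theorem IsLambdaGroupableCover.isLambdaGroupableSeq [TopologicalSpace Y]
    (h : IsLambdaGroupableCover X (range U)) : IsLambdaGroupableSeq X U := by
  classical
  obtain ⟨-, -, -, π, hπ_fin, hπ_ev⟩ := h
  set rep : ℕ → ℕ := fun n => Function.invFun U (U n)
  have hU_rep : ∀ n, U (rep n) = U n := fun n => Function.invFun_eq ⟨n, rfl⟩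
  have hrep_rep : ∀ n, rep (rep n) = rep n := fun n => congrArg (Function.invFun U) (hU_rep n)
  refine ⟨fun n => if rep n = n then π (U n) else n, fun m => ?_, fun x hx => ?_⟩
  · have hreps : {n | rep n = n ∧ π (U n) = m}.Finite := by
      refine Finite.of_finite_image (f := U) ((hπ_fin m).subset ?_) ?_
      · rintro _ ⟨n, ⟨-, hn⟩, rfl⟩
        exact ⟨⟨n, rfl⟩, hn⟩
      · rintro a ⟨ha, -⟩ b ⟨hb, -⟩ hab
        rw [← ha, ← hb]
        exact congrArg (Function.invFun U) hab
    refine (hreps.insert m).subset fun n hn => ?_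
    simp only [mem_preimage, mem_singleton_iff] at hn
    split_ifs at hn with hrep
    exacts [Or.inr ⟨hrep, hn⟩, Or.inl hn]
  · filter_upwards [hπ_ev x hx] with m ⟨_, ⟨⟨n, rfl⟩, hm⟩, hxn⟩
    refine mem_biUnion (x := rep n) ?_ (hU_rep n ▸ hxn)
    simp [hrep_rep, hU_rep, hm]

namespace IsLambdaGroupableSeq

theorem subset_iUnion (hU : IsLambdaGroupableSeq X U) : X ⊆ ⋃ n, U n := by
  obtain ⟨π, -, hπ⟩ := hU
  intro x hx
  obtain ⟨m, hm⟩ := (hπ x hx).exists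
  obtain ⟨k, -, hk⟩ := mem_iUnion₂.1 hm
  exact mem_iUnion.2 ⟨k, hk⟩

/-- The pieces `V ⟨n, j⟩` of `U n` join the group of `n`. -/
theorem of_subset_biUnion (hU : IsLambdaGroupableSeq X U) (s : ℕ → Finset ℕ)
    {V : ℕ → Set Y} (hUV : ∀ n, U n ⊆ ⋃ j ∈ s n, V (Nat.pair n j)) :
    IsLambdaGroupableSeq X V := by
  classical
  obtain ⟨π, hπ_fin, hπ_ev⟩ := hU
  refine ⟨fun k => if k.unpair.2 ∈ s k.unpair.1 then π k.unpair.1 else k,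
    fun m => ?_, fun x hx => ?_⟩
  · have hpieces : (⋃ n ∈ π ⁻¹' {m}, Nat.pair n '' (s n : Set ℕ)).Finite :=
      (hπ_fin m).biUnion fun n _ => (s n).finite_toSet.image _
    refine (hpieces.insert m).subset fun k hk => ?_
    simp only [mem_preimage, mem_singleton_iff] at hk
    split_ifs at hk with hks
    · exact Or.inr (mem_biUnion (x := k.unpair.1) hk ⟨k.unpair.2, hks, Nat.pair_unpair k⟩)
    · exact Or.inl hk
  · filter_upwards [hπ_ev x hx] with m hm
    obtain ⟨n, hn, hxn⟩ := mem_iUnion₂.1 hm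
    obtain ⟨j, hj, hxj⟩ := mem_iUnion₂.1 (hUV n hxn)
    refine mem_biUnion (x := Nat.pair n j) ?_ hxj
    simpa [hj] using hn

end IsLambdaGroupableSeq

end LambdaGroupable

theorem hasSharpMeasureZero_of_forall_isLambdaGroupableSeq {Y : Type*} [MetricSpace Y]
    {X : Set Y}
    (h : ∀ ε : ℕ → ℝ, (∀ n, 0 < ε n) → ∃ U : ℕ → Set Y,
      (∀ n, Metric.ediam (U n) ≤ ENNReal.ofReal (ε n)) ∧ IsLambdaGroupableSeq X U) :
    HasSharpMeasureZero X := by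
  intro ε hε
  obtain ⟨U, hdiam, hU⟩ := h ε hε
  have hcov := hU.subset_iUnion
  obtain ⟨π, hπ_fin, hπ_ev⟩ := hU
  exact ⟨U, π, hdiam, hcov, hπ_fin, hπ_ev⟩

theorem Set.Finite.exists_subset_image_finset {α : Type*} [Nonempty α] {F : Set α}
    (hF : F.Finite) : ∃ (c : ℕ → α) (s : Finset ℕ), F ⊆ c '' s := by
  obtain ⟨n, f, rfl⟩ := hF.fin_embedding
  refine ⟨fun j => if h : j < n then f ⟨j, h⟩ else Classical.arbitrary α, Finset.range n, ?_⟩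
  rintro _ ⟨i, rfl⟩
  exact ⟨i, by simp, by simp⟩

theorem exists_lt_and_half_pow_lt {ε : ℝ} (hε : 0 < ε) (k : ℕ) :
    ∃ L, k < L ∧ (1 / 2 : ℝ) ^ L < ε :=
  ((eventually_gt_atTop k).and ((tendsto_pow_atTop_nhds_zero_of_lt_one (by norm_num)
    (by norm_num)).eventually (gt_mem_nhds hε))).exists

theorem PiNat.ediam_cylinder_le {E : ℕ → Type*} [∀ n, TopologicalSpace (E n)]
    [∀ n, DiscreteTopology (E n)] (x : ∀ n, E n) (L : ℕ) :
    Metric.ediam (cylinder x L) ≤ ENNReal.ofReal ((1 / 2) ^ L) := by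
  refine Metric.ediam_le_of_forall_dist_le fun a ha b hb => mem_cylinder_iff_dist_le.1 ?_
  rw [mem_cylinder_iff_eq] at ha hb ⊢
  exact ha.trans hb.symm

def cylinderUnions (ℓ : ℕ → ℕ) : Set (Set (ℕ → Bool)) :=
  {W | ∃ (c : ℕ → ℕ → Bool) (s : Finset ℕ), W = ⋃ j ∈ s, cylinder (c j) (ℓ j)}

theorem isOmegaCover_cylinderUnions {ℓ : ℕ → ℕ} (hℓ : ∀ j, j < ℓ j) :
    IsOmegaCover (cylinderUnions ℓ) := by
  refine ⟨?_, ?_, fun F hF => ?_⟩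
  · rintro _ ⟨c, s, rfl⟩
    exact isOpen_biUnion fun j _ => isOpen_cylinder _ _ _
  · rintro ⟨c, s, hcs⟩
    have hdiag : (fun i => !c i i) ∈ ⋃ j ∈ s, cylinder (c j) (ℓ j) := hcs ▸ mem_univ _
    obtain ⟨j, -, hj⟩ := mem_iUnion₂.1 hdiag
    exact Bool.not_ne_self _ (mem_cylinder_iff.1 hj j (hℓ j))
  · obtain ⟨c, s, hFc⟩ := hF.exists_subset_image_finset
    refine ⟨_, ⟨c, s, rfl⟩, hFc.trans ?_⟩
    rintro _ ⟨j, hj, rfl⟩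
    exact mem_biUnion hj (self_mem_cylinder _ _)

/-- If the selection principle `S₁(Ω[C], GΛ[X|C])` holds for a subset `X` of the
Cantor space, then `X` has sharp measure zero. -/
theorem hasSharpMeasureZero_of_selection (X : Set (ℕ → Bool))
    (hsel : ∀ A : ℕ → Set (Set (ℕ → Bool)), (∀ n, IsOmegaCover (A n)) →
      ∃ U : ℕ → Set (ℕ → Bool), (∀ n, U n ∈ A n) ∧
        IsLambdaGroupableCover X (Set.range U)) :
    HasSharpMeasureZero X := by
  refine hasSharpMeasureZero_of_forall_isLambdaGroupableSeq fun ε hε => ?_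
  choose ℓ hℓ using fun k => exists_lt_and_half_pow_lt (hε k) k
  obtain ⟨U, hUA, hU⟩ := hsel (fun n => cylinderUnions (ℓ ∘ Nat.pair n)) fun n =>
    isOmegaCover_cylinderUnions fun j => (Nat.right_le_pair n j).trans_lt (hℓ _).1
  choose c s hUcs using hUA
  refine ⟨fun k => cylinder (c k.unpair.1 k.unpair.2) (ℓ k),
    fun k => (ediam_cylinder_le _ _).trans (ENNReal.ofReal_le_ofReal (hℓ k).2.le),
    hU.isLambdaGroupableSeq.of_subset_biUnion s fun n => ?_⟩
  simp [hUcs n]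
end
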